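/- arXiv:math/0312355 — 3 statements merged into one kernel-verified Lean document; each statement's English description precedes it below -/
import Mathlib

section
/- For every ξ ∈ 𝔤 one has the operator identity ad_ξ ∘ H_ξ = ad_{∇p(ξ)} as linear maps 𝔤 → 𝔤, where H_ξ is the Hessian of p at ξ; i.e. [ξ, H_ξ(v)] = [∇p(ξ), v] for all v ∈ 𝔤. -/
open scoped RealInnerProductSpace

/-!
Differentiating the invariance identity `Dp(x)[y, x] = 0` at `ξ` in the direction `v` gives
`D²p(ξ)(v, [y, ξ]) + Dp(ξ)[y, v] = 0`. Pairing both sides of the claimed identity with an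
arbitrary `y` and moving the brackets across the inner product by ad-invariance turns the
claim into exactly this equation.
-/

lemma inner_gradient_eq_fderiv_apply {F : Type*} [NormedAddCommGroup F] [InnerProductSpace ℝ F]
    [CompleteSpace F] (f : F → ℝ) (x c : F) : ⟪gradient f x, c⟫ = fderiv ℝ f x c := by
  rw [← InnerProductSpace.toDual_apply_apply, toDual_gradient]

lemma fderiv_apply_add_fderiv_fderiv_apply_eq_zero {E F : Type*} [NormedAddCommGroup E]
    [NormedSpace ℝ E] [NormedAddCommGroup F] [NormedSpace ℝ F] {f : E → F} (A : E →L[ℝ] E)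
    (hA : ∀ x, fderiv ℝ f x (A x) = 0) {ξ : E} (hf : DifferentiableAt ℝ (fderiv ℝ f) ξ) (v : E) :
    fderiv ℝ f ξ (A v) + fderiv ℝ (fderiv ℝ f) ξ v (A ξ) = 0 := by
  have hderiv := hf.hasFDerivAt.clm_apply A.hasFDerivAt
  have hconst : (fun x => fderiv ℝ f x (A x)) = fun _ => 0 := funext hA
  rw [hconst] at hderiv
  simpa using congrArg (· v) (hderiv.unique (hasFDerivAt_const 0 ξ))

lemma inner_bracket_left_eq_inner_bracket_right {G : Type*} [NormedAddCommGroup G]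
    [InnerProductSpace ℝ G] (bk : G →ₗ[ℝ] G →ₗ[ℝ] G) (hanti : ∀ x y : G, bk x y = -bk y x)
    (hadinv : ∀ x y z : G, ⟪bk x y, z⟫ + ⟪y, bk x z⟫ = 0) (x y z : G) :
    ⟪bk x y, z⟫ = ⟪x, bk y z⟫ := by
  rw [hanti x y, inner_neg_left]
  linarith [hadinv y x z]

theorem stmt3_general {G : Type*} [NormedAddCommGroup G] [InnerProductSpace ℝ G]
    [FiniteDimensional ℝ G]
    (bk : G →ₗ[ℝ] G →ₗ[ℝ] G)
    (hanti : ∀ x y : G, bk x y = -bk y x)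
    (hadinv : ∀ x y z : G, ⟪bk x y, z⟫ + ⟪y, bk x z⟫ = 0)
    (p : G → ℝ) (hp : ContDiff ℝ 2 p)
    (hpinv : ∀ x y : G, ⟪gradient p x, bk y x⟫ = 0)
    (ξ : G) (H : G →ₗ[ℝ] G)
    (hH : ∀ v w : G, ⟪H v, w⟫ = iteratedFDeriv ℝ 2 p ξ ![v, w]) :
    ∀ v : G, bk ξ (H v) = bk (gradient p ξ) v := by
  intro v
  have hcyc := inner_bracket_left_eq_inner_bracket_right bk hanti hadinv
  have hdiff : DifferentiableAt ℝ (fderiv ℝ p) ξ :=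
    (hp.fderiv_right (by norm_num)).differentiable one_ne_zero ξ
  refine ext_inner_right ℝ fun y => ?_
  have hinv : ∀ x, fderiv ℝ p x ((bk y).toContinuousLinearMap x) = 0 := fun x => by
    simpa [inner_gradient_eq_fderiv_apply] using hpinv x y
  calc ⟪bk ξ (H v), y⟫ = ⟪H v, bk y ξ⟫ := by
        rw [hcyc, real_inner_comm, hcyc]
    _ = fderiv ℝ (fderiv ℝ p) ξ v (bk y ξ) := by
        rw [hH, iteratedFDeriv_two_apply]; simp
    _ = -fderiv ℝ p ξ (bk y v) :=
        eq_neg_of_add_eq_zero_right (fderiv_apply_add_fderiv_fderiv_apply_eq_zero _ hinv hdiff v)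
    _ = ⟪gradient p ξ, bk v y⟫ := by
        rw [hanti y v, map_neg, neg_neg, inner_gradient_eq_fderiv_apply]
    _ = ⟪bk (gradient p ξ) v, y⟫ := (hcyc _ _ _).symm

/-- Let `𝔤` be a finite-dimensional real Lie algebra (bracket `bk`) with an
ad-invariant inner product, and `p` a twice continuously differentiable infinitesimally
invariant function. Let `H` be the Hessian of `p` at `ξ`, the symmetric linear map with
`⟪H v, w⟫ = (second derivative of p at ξ in directions v, w)`. Then
`ad_ξ ∘ H = ad_{∇p(ξ)}`, i.e. `[ξ, H v] = [∇p(ξ), v]` for all `v`. -/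
theorem stmt3 {G : Type*} [NormedAddCommGroup G] [InnerProductSpace ℝ G]
    [FiniteDimensional ℝ G]
    (bk : G →ₗ[ℝ] G →ₗ[ℝ] G)
    (hanti : ∀ x y : G, bk x y = -bk y x)
    (hjacobi : ∀ x y z : G, bk x (bk y z) = bk (bk x y) z + bk y (bk x z))
    (hadinv : ∀ x y z : G, ⟪bk x y, z⟫ + ⟪y, bk x z⟫ = 0)
    (p : G → ℝ) (hp : ContDiff ℝ 2 p)
    (hpinv : ∀ x y : G, ⟪gradient p x, bk y x⟫ = 0)
    (ξ : G) (H : G →ₗ[ℝ] G)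
    (hH : ∀ v w : G, ⟪H v, w⟫ = iteratedFDeriv ℝ 2 p ξ ![v, w]) :
    ∀ v : G, bk ξ (H v) = bk (gradient p ξ) v :=
  stmt3_general bk hanti hadinv p hp hpinv ξ H hH
end

section
/- Suppose ξ ∈ 𝔤 is such that the centralizer 𝔱 = ker(ad ξ) is abelian. Then 𝔭 := im(ad ξ) equals the orthogonal complement 𝔱^⊥, and the Hessian H_ξ of p at ξ preserves the orthogonal decomposition 𝔤 = 𝔱 ⊕ 𝔭, i.e. H_ξ(𝔱) ⊆ 𝔱 and H_ξ(𝔭) ⊆ 𝔭. (This is the infinitesimal, coordinate-free form of the assertion that for an invariant polynomial p and ξ in the Cartan subalgebra, the second-derivative matrix p''(ξ) has block-diagonal form with respect to 𝔤 = 𝔱 ⊕ 𝔭.) -/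
/-!
Since `ad ξ` is skew-adjoint, `𝔭 = im (ad ξ)` and `𝔱 = ker (ad ξ)` are orthogonal complements.
Invariance at `ξ` says `∇p(ξ) ⊥ 𝔭`, so `∇p(ξ) ∈ 𝔱`. Differentiating the invariance identity
`Dp(x)[y, x] = 0` at `ξ` in a direction `v` gives `⟪H_ξ v, [y, ξ]⟫ + ⟪∇p(ξ), [y, v]⟫ = 0`, and for
`v ∈ 𝔱` the second term is `⟪[v, ∇p(ξ)], y⟫ = 0` because `𝔱` is abelian. Hence `H_ξ v ⊥ 𝔭`, i.e.
`H_ξ` preserves `𝔱`; being symmetric, it then also preserves `𝔱ᗮ = 𝔭`.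
-/

open Set
open scoped Gradient RealInnerProductSpace

section SkewAdjoint

variable {𝕜 E : Type*} [RCLike 𝕜] [NormedAddCommGroup E] [InnerProductSpace 𝕜 E]
  [FiniteDimensional 𝕜 E] {A : E →ₗ[𝕜] E}

theorem LinearMap.orthogonal_range_eq_ker_of_adjoint_eq_neg (hA : A.adjoint = -A) :
    A.rangeᗮ = A.ker := by
  rw [A.orthogonal_range, hA, LinearMap.ker_neg]

theorem LinearMap.range_eq_orthogonal_ker_of_adjoint_eq_neg (hA : A.adjoint = -A) :
    A.range = A.kerᗮ := by
  rw [A.orthogonal_ker, hA, LinearMap.range_neg]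

end SkewAdjoint

theorem LinearMap.IsSymmetric.mapsTo_orthogonal {𝕜 E : Type*} [RCLike 𝕜] [NormedAddCommGroup E]
    [InnerProductSpace 𝕜 E] {T : E →ₗ[𝕜] E} (hT : T.IsSymmetric) {K : Submodule 𝕜 E}
    (hK : MapsTo T K K) : MapsTo T Kᗮ Kᗮ := by
  intro v hv u hu
  rw [← hT u v]
  exact hv _ (hK hu)

theorem fderiv_fderiv_apply_add_fderiv_apply_eq_zero {𝕜 E F : Type*} [NontriviallyNormedField 𝕜]
    [NormedAddCommGroup E] [NormedSpace 𝕜 E] [NormedAddCommGroup F] [NormedSpace 𝕜 F]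
    {f : E → F} {L : E →L[𝕜] E} {x : E} (hf : DifferentiableAt 𝕜 (fderiv 𝕜 f) x)
    (h : ∀ y, fderiv 𝕜 f y (L y) = 0) (v : E) :
    fderiv 𝕜 (fderiv 𝕜 f) x v (L x) + fderiv 𝕜 f x (L v) = 0 := by
  have h0 : fderiv 𝕜 (fun y => fderiv 𝕜 f y (L y)) x = 0 := by simp [h]
  have := congr($((fderiv_clm_apply hf L.differentiableAt).symm.trans h0) v)
  simpa [add_comm] using this

section Hessian

variable {E : Type*} [NormedAddCommGroup E] [InnerProductSpace ℝ E] {p : E → ℝ} {ξ : E}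
  {H : E →ₗ[ℝ] E}

theorem LinearMap.isSymmetric_of_inner_eq_iteratedFDeriv_two (hp : ContDiffAt ℝ 2 p ξ)
    (hH : ∀ v w, ⟪H v, w⟫ = iteratedFDeriv ℝ 2 p ξ ![v, w]) : H.IsSymmetric := by
  intro v w
  rw [real_inner_comm (H w), hH, hH, iteratedFDeriv_two_apply, iteratedFDeriv_two_apply]
  exact hp.isSymmSndFDerivAt (by simp [minSmoothness_of_isRCLikeNormedField]) v w

theorem inner_apply_add_inner_gradient_eq_zero [CompleteSpace E] (hp : ContDiffAt ℝ 2 p ξ)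
    (hH : ∀ v w, ⟪H v, w⟫ = iteratedFDeriv ℝ 2 p ξ ![v, w]) {L : E →L[ℝ] E}
    (hL : ∀ x, ⟪∇ p x, L x⟫ = 0) (v : E) : ⟪H v, L ξ⟫ + ⟪∇ p ξ, L v⟫ = 0 := by
  have hf : DifferentiableAt ℝ (fderiv ℝ p) ξ :=
    (hp.fderiv_right (m := 1) (by norm_num)).differentiableAt one_ne_zero
  rw [hH, iteratedFDeriv_two_apply, inner_gradient_left]
  exact fderiv_fderiv_apply_add_fderiv_apply_eq_zero hf (by simpa using hL) v

end Hessian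

theorem stmt4_general {G : Type*} [NormedAddCommGroup G] [InnerProductSpace ℝ G]
    [FiniteDimensional ℝ G]
    (bk : G →ₗ[ℝ] G →ₗ[ℝ] G)
    (hanti : ∀ x y : G, bk x y = -bk y x)
    (hadinv : ∀ x y z : G, ⟪bk x y, z⟫ + ⟪y, bk x z⟫ = 0)
    (p : G → ℝ) (hp : ContDiff ℝ 2 p)
    (hpinv : ∀ x y : G, ⟪gradient p x, bk y x⟫ = 0)
    (ξ : G) (H : G →ₗ[ℝ] G)
    (hH : ∀ v w : G, ⟪H v, w⟫ = iteratedFDeriv ℝ 2 p ξ ![v, w])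
    (habel : ∀ x ∈ LinearMap.ker (bk ξ), ∀ y ∈ LinearMap.ker (bk ξ), bk x y = 0) :
    LinearMap.range (bk ξ) = (LinearMap.ker (bk ξ))ᗮ ∧
      (∀ v ∈ LinearMap.ker (bk ξ), H v ∈ LinearMap.ker (bk ξ)) ∧
      (∀ v ∈ LinearMap.range (bk ξ), H v ∈ LinearMap.range (bk ξ)) := by
  have hskew : (bk ξ).adjoint = -bk ξ :=
    (((-bk ξ).eq_adjoint_iff (bk ξ)).mpr fun x y => by
      rw [LinearMap.neg_apply, inner_neg_left, neg_eq_iff_add_eq_zero, hadinv]).symm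
  have hker := LinearMap.orthogonal_range_eq_ker_of_adjoint_eq_neg hskew
  have hrange := LinearMap.range_eq_orthogonal_ker_of_adjoint_eq_neg hskew
  have hgrad : ∇ p ξ ∈ LinearMap.ker (bk ξ) := by
    rw [← hker]
    rintro _ ⟨y, rfl⟩
    rw [hanti, inner_neg_left, real_inner_comm, hpinv, neg_zero]
  have hHker : MapsTo H (LinearMap.ker (bk ξ)) (LinearMap.ker (bk ξ)) := by
    intro v hv
    rw [SetLike.mem_coe, ← hker]
    rintro _ ⟨y, rfl⟩
    have hsecond := inner_apply_add_inner_gradient_eq_zero hp.contDiffAt hH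
      (L := (bk y).toContinuousLinearMap) (fun x => hpinv x y) v
    have hgrad_v : ⟪∇ p ξ, bk y v⟫ = 0 := by
      have hinv := hadinv v y (∇ p ξ)
      rw [habel v hv _ hgrad, inner_zero_right, add_zero] at hinv
      rw [hanti, inner_neg_right, real_inner_comm, hinv, neg_zero]
    simp only [LinearMap.coe_toContinuousLinearMap', hgrad_v, add_zero] at hsecond
    rw [hanti, inner_neg_left, real_inner_comm, hsecond, neg_zero]
  refine ⟨hrange, hHker, ?_⟩
  rw [hrange]
  exact (LinearMap.isSymmetric_of_inner_eq_iteratedFDeriv_two hp.contDiffAt hH).mapsTo_orthogonal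
    hHker

/-- Let `𝔤` be a finite-dimensional real Lie algebra (bracket `bk`) with an
ad-invariant inner product, and `p` a twice continuously differentiable infinitesimally
invariant function, with Hessian `H` at `ξ`. Suppose the centralizer `𝔱 = ker (ad ξ)` is
abelian. Then `im (ad ξ) = 𝔱ᗮ`, and the Hessian preserves the orthogonal decomposition
`𝔤 = 𝔱 ⊕ 𝔭`: it maps `𝔱` into `𝔱` and `𝔭 = im (ad ξ)` into itself. -/
theorem stmt4 {G : Type*} [NormedAddCommGroup G] [InnerProductSpace ℝ G]
    [FiniteDimensional ℝ G]
    (bk : G →ₗ[ℝ] G →ₗ[ℝ] G)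
    (hanti : ∀ x y : G, bk x y = -bk y x)
    (hjacobi : ∀ x y z : G, bk x (bk y z) = bk (bk x y) z + bk y (bk x z))
    (hadinv : ∀ x y z : G, ⟪bk x y, z⟫ + ⟪y, bk x z⟫ = 0)
    (p : G → ℝ) (hp : ContDiff ℝ 2 p)
    (hpinv : ∀ x y : G, ⟪gradient p x, bk y x⟫ = 0)
    (ξ : G) (H : G →ₗ[ℝ] G)
    (hH : ∀ v w : G, ⟪H v, w⟫ = iteratedFDeriv ℝ 2 p ξ ![v, w])
    (habel : ∀ x ∈ LinearMap.ker (bk ξ), ∀ y ∈ LinearMap.ker (bk ξ), bk x y = 0) :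
    LinearMap.range (bk ξ) = (LinearMap.ker (bk ξ))ᗮ ∧
      (∀ v ∈ LinearMap.ker (bk ξ), H v ∈ LinearMap.ker (bk ξ)) ∧
      (∀ v ∈ LinearMap.range (bk ξ), H v ∈ LinearMap.range (bk ξ)) :=
  stmt4_general bk hanti hadinv p hp hpinv ξ H hH habel
end

section
/- Suppose ξ ∈ 𝔤 is such that 𝔱 = ker(ad ξ) is abelian, and set 𝔭 = im(ad ξ) = 𝔱^⊥. Then the three linear maps H_ξ, ad_ξ and ad_{∇p(ξ)} all map 𝔭 into itself, and their restrictions to 𝔭 satisfy det(H_ξ|_𝔭) · det(ad_ξ|_𝔭) = det(ad_{∇p(ξ)}|_𝔭). (This is the coordinate-free form of the determinant formula det(p''(ξ)|_𝔭)^{1/2} = ∏_{α∈R_+} (α·p'(ξ))/(α·ξ) for a regular element ξ of the Cartan subalgebra of a compact Lie algebra, since for ζ in the Cartan subalgebra det(ad_ζ|_𝔭) is the square of the product of the positive-root pairings with ζ up to a common normalization.) -/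
open scoped RealInnerProductSpace

/-!
Differentiating the invariance identity `⟪∇p x, [y, x]⟫ = 0` at `ξ` gives `ad_ξ ∘ H = ad_{∇p(ξ)}`,
and evaluating it at `x = ξ` shows `∇p(ξ) ∈ 𝔱`. Since `𝔱` is abelian, `ad_ξ (H t) = [∇p(ξ), t] = 0`
for `t ∈ 𝔱`, so the symmetric map `H` preserves `𝔱`, hence also `𝔱ᗮ`, which is `𝔭` because `ad_ξ` is
skew-adjoint. The determinant identity is then multiplicativity of `det` on `𝔭`.
-/

section Hessian

variable {G : Type*} [NormedAddCommGroup G] [InnerProductSpace ℝ G]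

theorem inner_eq_fderiv_fderiv_of_eq_iteratedFDeriv {p : G → ℝ} {ξ : G} {H : G →ₗ[ℝ] G}
    (hH : ∀ v w : G, ⟪H v, w⟫ = iteratedFDeriv ℝ 2 p ξ ![v, w]) (v w : G) :
    ⟪H v, w⟫ = fderiv ℝ (fderiv ℝ p) ξ v w := by
  simp [hH, iteratedFDeriv_two_apply]

theorem isSymmetric_of_eq_iteratedFDeriv {p : G → ℝ} {ξ : G} (hp : ContDiffAt ℝ 2 p ξ)
    {H : G →ₗ[ℝ] G} (hH : ∀ v w : G, ⟪H v, w⟫ = iteratedFDeriv ℝ 2 p ξ ![v, w]) :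
    H.IsSymmetric := by
  have hsymm := hp.isSymmSndFDerivAt (by simp [minSmoothness_of_isRCLikeNormedField])
  intro v w
  rw [real_inner_comm (H w), inner_eq_fderiv_fderiv_of_eq_iteratedFDeriv hH,
    inner_eq_fderiv_fderiv_of_eq_iteratedFDeriv hH, hsymm.eq]

theorem hasFDerivAt_gradient_of_eq_iteratedFDeriv [FiniteDimensional ℝ G] {p : G → ℝ} {ξ : G}
    (hp : ContDiffAt ℝ 2 p ξ) {H : G →ₗ[ℝ] G}
    (hH : ∀ v w : G, ⟪H v, w⟫ = iteratedFDeriv ℝ 2 p ξ ![v, w]) :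
    HasFDerivAt (gradient p) (LinearMap.toContinuousLinearMap H) ξ := by
  have hdiff : DifferentiableAt ℝ (fderiv ℝ p) ξ :=
    (hp.fderiv_right (m := 1) (by norm_num)).differentiableAt one_ne_zero
  refine ((InnerProductSpace.toDual ℝ G).symm.toContinuousLinearEquiv.hasFDerivAt.comp ξ
    hdiff.hasFDerivAt).congr_fderiv ?_
  ext v
  refine ext_inner_right ℝ fun w => ?_
  simp [InnerProductSpace.toDual_symm_apply, inner_eq_fderiv_fderiv_of_eq_iteratedFDeriv hH]

end Hessian

theorem HasFDerivAt.inner_add_inner_map_eq_zero {G : Type*} [NormedAddCommGroup G]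
    [InnerProductSpace ℝ G] {f : G → G} {D B : G →L[ℝ] G} {ξ : G} (hf : HasFDerivAt f D ξ)
    (h : ∀ x, ⟪f x, B x⟫ = 0) (v : G) : ⟪f ξ, B v⟫ + ⟪D v, B ξ⟫ = 0 := by
  have hderiv := hf.inner ℝ B.hasFDerivAt
  simp only [h] at hderiv
  simpa using (DFunLike.congr_fun (hderiv.unique (hasFDerivAt_const 0 ξ)) v)

theorem LinearMap.IsSymmetric.mem_orthogonal_of_mapsTo {G : Type*} [NormedAddCommGroup G]
    [InnerProductSpace ℝ G] {T : G →ₗ[ℝ] G} (hT : T.IsSymmetric) {K : Submodule ℝ G}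
    (hK : ∀ v ∈ K, T v ∈ K) {v : G} (hv : v ∈ Kᗮ) : T v ∈ Kᗮ := by
  intro w hw
  rw [← hT]
  exact hv _ (hK w hw)

section SkewAdjoint

variable {G : Type*} [NormedAddCommGroup G] [InnerProductSpace ℝ G] {A : G →ₗ[ℝ] G}

theorem orthogonal_range_eq_ker_of_skew (hA : ∀ a b : G, ⟪A a, b⟫ = -⟪a, A b⟫) :
    (LinearMap.range A)ᗮ = LinearMap.ker A := by
  ext w
  simp only [Submodule.mem_orthogonal, LinearMap.mem_range, forall_exists_index,
    forall_apply_eq_imp_iff, LinearMap.mem_ker]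
  refine ⟨fun hw => ext_inner_right ℝ fun z => ?_, fun hw z => ?_⟩
  · rw [hA, real_inner_comm, hw, neg_zero, inner_zero_left]
  · rw [hA, hw, inner_zero_right, neg_zero]

theorem orthogonal_ker_eq_range_of_skew [FiniteDimensional ℝ G]
    (hA : ∀ a b : G, ⟪A a, b⟫ = -⟪a, A b⟫) : (LinearMap.ker A)ᗮ = LinearMap.range A := by
  rw [← orthogonal_range_eq_ker_of_skew hA, Submodule.orthogonal_orthogonal]

end SkewAdjoint

section Bracket

variable {G : Type*} [NormedAddCommGroup G] [InnerProductSpace ℝ G] {bk : G →ₗ[ℝ] G →ₗ[ℝ] G}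

theorem inner_bk_left_eq_neg (hadinv : ∀ x y z : G, ⟪bk x y, z⟫ + ⟪y, bk x z⟫ = 0)
    (x a b : G) : ⟪bk x a, b⟫ = -⟪a, bk x b⟫ :=
  eq_neg_of_add_eq_zero_left (hadinv x a b)

theorem bk_eq_zero_of_inner_bk_eq_zero (hanti : ∀ x y : G, bk x y = -bk y x)
    (hadinv : ∀ x y z : G, ⟪bk x y, z⟫ + ⟪y, bk x z⟫ = 0) {ξ g : G}
    (h : ∀ y, ⟪g, bk y ξ⟫ = 0) : bk ξ g = 0 := by
  refine ext_inner_right ℝ fun y => ?_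
  rw [inner_bk_left_eq_neg hadinv, ← neg_neg (bk ξ y), ← hanti, inner_neg_right, h,
    neg_zero, neg_zero, inner_zero_left]

theorem bk_comp_eq_bk_of_inner_bk_add_inner_bk_eq_zero (hanti : ∀ x y : G, bk x y = -bk y x)
    (hadinv : ∀ x y z : G, ⟪bk x y, z⟫ + ⟪y, bk x z⟫ = 0) {ξ g : G} {H : G →ₗ[ℝ] G}
    (h : ∀ y v, ⟪g, bk y v⟫ + ⟪H v, bk y ξ⟫ = 0) (v : G) : bk ξ (H v) = bk g v := by
  refine ext_inner_right ℝ fun y => ?_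
  have skew := inner_bk_left_eq_neg hadinv
  calc ⟪bk ξ (H v), y⟫ = ⟪H v, bk y ξ⟫ := by rw [skew, hanti, inner_neg_right, neg_neg]
    _ = -⟪g, bk y v⟫ := eq_neg_of_add_eq_zero_right (h y v)
    _ = ⟪bk g v, y⟫ := by
      rw [← skew, hanti y g, inner_neg_left, skew, neg_neg, real_inner_comm]

end Bracket

theorem stmt5_general {G : Type*} [NormedAddCommGroup G] [InnerProductSpace ℝ G]
    [FiniteDimensional ℝ G]
    (bk : G →ₗ[ℝ] G →ₗ[ℝ] G)
    (hanti : ∀ x y : G, bk x y = -bk y x)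
    (hadinv : ∀ x y z : G, ⟪bk x y, z⟫ + ⟪y, bk x z⟫ = 0)
    (p : G → ℝ) (hp : ContDiff ℝ 2 p)
    (hpinv : ∀ x y : G, ⟪gradient p x, bk y x⟫ = 0)
    (ξ : G) (H : G →ₗ[ℝ] G)
    (hH : ∀ v w : G, ⟪H v, w⟫ = iteratedFDeriv ℝ 2 p ξ ![v, w])
    (habel : ∀ x ∈ LinearMap.ker (bk ξ), ∀ y ∈ LinearMap.ker (bk ξ), bk x y = 0) :
    ∃ (h₁ : ∀ v ∈ LinearMap.range (bk ξ), H v ∈ LinearMap.range (bk ξ))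
      (h₂ : ∀ v ∈ LinearMap.range (bk ξ), bk ξ v ∈ LinearMap.range (bk ξ))
      (h₃ : ∀ v ∈ LinearMap.range (bk ξ),
          bk (gradient p ξ) v ∈ LinearMap.range (bk ξ)),
      LinearMap.det (H.restrict h₁) * LinearMap.det ((bk ξ).restrict h₂) =
        LinearMap.det ((bk (gradient p ξ)).restrict h₃) := by
  have hD := hasFDerivAt_gradient_of_eq_iteratedFDeriv hp.contDiffAt hH
  have hadH : ∀ v, bk ξ (H v) = bk (gradient p ξ) v :=
    bk_comp_eq_bk_of_inner_bk_add_inner_bk_eq_zero hanti hadinv fun y =>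
      hD.inner_add_inner_map_eq_zero (B := LinearMap.toContinuousLinearMap (bk y)) (hpinv · y)
  have hgrad : gradient p ξ ∈ LinearMap.ker (bk ξ) :=
    bk_eq_zero_of_inner_bk_eq_zero hanti hadinv (hpinv ξ)
  have hker : ∀ t ∈ LinearMap.ker (bk ξ), H t ∈ LinearMap.ker (bk ξ) := fun t ht => by
    rw [LinearMap.mem_ker, hadH]
    exact habel _ hgrad _ ht
  have h₁ : ∀ v ∈ LinearMap.range (bk ξ), H v ∈ LinearMap.range (bk ξ) := by
    simp_rw [← orthogonal_ker_eq_range_of_skew (inner_bk_left_eq_neg hadinv ξ)]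
    exact fun v => (isSymmetric_of_eq_iteratedFDeriv hp.contDiffAt hH).mem_orthogonal_of_mapsTo hker
  refine ⟨h₁, fun v _ => ⟨v, rfl⟩, fun v _ => ⟨H v, hadH v⟩, ?_⟩
  rw [mul_comm, ← LinearMap.det_comp]
  exact congrArg LinearMap.det (LinearMap.ext fun v => Subtype.ext (hadH v))

/-- Let `𝔤` be a finite-dimensional real Lie algebra (bracket `bk`) with an
ad-invariant inner product, and `p` a twice continuously differentiable infinitesimally
invariant function, with Hessian `H` at `ξ`. Suppose `𝔱 = ker (ad ξ)` is abelian, and set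
`𝔭 = im (ad ξ)`. Then `H`, `ad_ξ` and `ad_{∇p(ξ)}` all map `𝔭` into itself, and their
restrictions to `𝔭` satisfy `det (H|𝔭) · det (ad_ξ|𝔭) = det (ad_{∇p(ξ)}|𝔭)`. -/
theorem stmt5 {G : Type*} [NormedAddCommGroup G] [InnerProductSpace ℝ G]
    [FiniteDimensional ℝ G]
    (bk : G →ₗ[ℝ] G →ₗ[ℝ] G)
    (hanti : ∀ x y : G, bk x y = -bk y x)
    (hjacobi : ∀ x y z : G, bk x (bk y z) = bk (bk x y) z + bk y (bk x z))
    (hadinv : ∀ x y z : G, ⟪bk x y, z⟫ + ⟪y, bk x z⟫ = 0)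
    (p : G → ℝ) (hp : ContDiff ℝ 2 p)
    (hpinv : ∀ x y : G, ⟪gradient p x, bk y x⟫ = 0)
    (ξ : G) (H : G →ₗ[ℝ] G)
    (hH : ∀ v w : G, ⟪H v, w⟫ = iteratedFDeriv ℝ 2 p ξ ![v, w])
    (habel : ∀ x ∈ LinearMap.ker (bk ξ), ∀ y ∈ LinearMap.ker (bk ξ), bk x y = 0) :
    ∃ (h₁ : ∀ v ∈ LinearMap.range (bk ξ), H v ∈ LinearMap.range (bk ξ))
      (h₂ : ∀ v ∈ LinearMap.range (bk ξ), bk ξ v ∈ LinearMap.range (bk ξ))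
      (h₃ : ∀ v ∈ LinearMap.range (bk ξ),
          bk (gradient p ξ) v ∈ LinearMap.range (bk ξ)),
      LinearMap.det (H.restrict h₁) * LinearMap.det ((bk ξ).restrict h₂) =
        LinearMap.det ((bk (gradient p ξ)).restrict h₃) :=
  stmt5_general bk hanti hadinv p hp hpinv ξ H hH habel
end
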